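/- arXiv:2602.12213 — 5 statements merged into one kernel-verified Lean document; each statement's English description precedes it below -/
import Mathlib

section
/- Let q = p^r be a power of the prime p and let (γ₁, …, γ_r) be an 𝔽_p-basis of 𝔽_q. Then the set {γ_j·t^{−i} : 1 ≤ j ≤ r, i ≥ 1, p ∤ i} is 𝔽_p-linearly independent in 𝒱(𝔽_q(t)). Concretely: if U ∈ 𝔽_q[T] is a polynomial with U(0) = 0 whose nonzero monomials all have degree not divisible by p, and if there exists z ∈ 𝔽_q(t) with z^p − z = U(1/t), then U = 0. -/
open Polynomial Multiplicative

section aux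

variable {K : Type*} [Field K]

lemma val_X_inv : (Polynomial.idealX K).valuation (RatFunc K) (RatFunc.X : RatFunc K)⁻¹ =
    ((Multiplicative.ofAdd (1 : ℤ) : Multiplicative ℤ) : WithZero (Multiplicative ℤ)) := by
  rw [map_inv₀, Polynomial.valuation_X_eq_neg_one]
  rw [WithZero.exp]
  rw [← WithZero.coe_inv, ← ofAdd_neg, neg_neg]

lemma val_C_le (c : K) :
    (Polynomial.idealX K).valuation (RatFunc K) (algebraMap K (RatFunc K) c) ≤ 1 := by
  rw [IsScalarTower.algebraMap_apply K K[X] (RatFunc K)]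
  exact (Polynomial.idealX K).valuation_le_one (K := RatFunc K) _

lemma val_C_eq (c : K) (hc : c ≠ 0) :
    (Polynomial.idealX K).valuation (RatFunc K) (algebraMap K (RatFunc K) c) = 1 := by
  refine le_antisymm (val_C_le c) ?_
  have h1 : (Polynomial.idealX K).valuation (RatFunc K) (algebraMap K (RatFunc K) c) *
      (Polynomial.idealX K).valuation (RatFunc K) (algebraMap K (RatFunc K) c⁻¹) = 1 := by
    rw [← map_mul, ← map_mul, mul_inv_cancel₀ hc, map_one, map_one]
  calc (1 : WithZero (Multiplicative ℤ)) = _ * _ := h1.symm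
    _ ≤ (Polynomial.idealX K).valuation (RatFunc K) (algebraMap K (RatFunc K) c) * 1 :=
        mul_le_mul_right (val_C_le c⁻¹) _
    _ = _ := mul_one _

lemma val_aeval_le (V : K[X]) :
    (Polynomial.idealX K).valuation (RatFunc K) (Polynomial.aeval (RatFunc.X : RatFunc K)⁻¹ V) ≤
      ((Multiplicative.ofAdd (V.natDegree : ℤ) : Multiplicative ℤ) : WithZero (Multiplicative ℤ)) := by
  rw [Polynomial.aeval_eq_sum_range]
  apply Valuation.map_sum_le
  intro i hi
  rw [Algebra.smul_def, map_mul, map_pow, val_X_inv, ← WithZero.coe_pow, ← ofAdd_nsmul,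
    nsmul_eq_mul, mul_one]
  calc _ ≤ 1 * ((Multiplicative.ofAdd (i : ℤ) : Multiplicative ℤ) : WithZero (Multiplicative ℤ)) :=
        mul_le_mul_left (val_C_le _) _
    _ = ((Multiplicative.ofAdd (i : ℤ) : Multiplicative ℤ) : WithZero (Multiplicative ℤ)) := one_mul _
    _ ≤ _ := by
        rw [WithZero.coe_le_coe, Multiplicative.ofAdd_le]
        exact_mod_cast Nat.lt_succ_iff.mp (Finset.mem_range.mp hi)

lemma val_aeval_eq {V : K[X]} (hV : V ≠ 0) :
    (Polynomial.idealX K).valuation (RatFunc K) (Polynomial.aeval (RatFunc.X : RatFunc K)⁻¹ V) =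
      ((Multiplicative.ofAdd (V.natDegree : ℤ) : Multiplicative ℤ) : WithZero (Multiplicative ℤ)) := by
  set n := V.natDegree with hn
  have hsplit := V.eraseLead_add_C_mul_X_pow
  have hlead : (Polynomial.idealX K).valuation (RatFunc K)
      (Polynomial.aeval (RatFunc.X : RatFunc K)⁻¹ (Polynomial.C V.leadingCoeff * X ^ n)) =
      ((Multiplicative.ofAdd (n : ℤ) : Multiplicative ℤ) : WithZero (Multiplicative ℤ)) := by
    rw [map_mul, map_pow, Polynomial.aeval_X, Polynomial.aeval_C, map_mul, map_pow,
      val_C_eq _ (Polynomial.leadingCoeff_ne_zero.mpr hV), one_mul, val_X_inv,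
      ← WithZero.coe_pow, ← ofAdd_nsmul, nsmul_eq_mul, mul_one]
  have herase : (Polynomial.idealX K).valuation (RatFunc K)
      (Polynomial.aeval (RatFunc.X : RatFunc K)⁻¹ V.eraseLead) <
      ((Multiplicative.ofAdd (n : ℤ) : Multiplicative ℤ) : WithZero (Multiplicative ℤ)) := by
    rcases V.eraseLead_natDegree_lt_or_eraseLead_eq_zero with h | h
    · refine lt_of_le_of_lt (val_aeval_le _) ?_
      rw [WithZero.coe_lt_coe, Multiplicative.ofAdd_lt]
      exact_mod_cast h
    · rw [h, map_zero, map_zero]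
      exact WithZero.zero_lt_coe _
  calc (Polynomial.idealX K).valuation (RatFunc K) (Polynomial.aeval (RatFunc.X : RatFunc K)⁻¹ V)
      = (Polynomial.idealX K).valuation (RatFunc K)
        (Polynomial.aeval (RatFunc.X : RatFunc K)⁻¹ V.eraseLead +
         Polynomial.aeval (RatFunc.X : RatFunc K)⁻¹ (Polynomial.C V.leadingCoeff * X ^ n)) := by
        rw [← map_add, hsplit]
    _ = _ := by
        rw [Valuation.map_add_eq_of_lt_right]
        · exact hlead
        · rw [hlead]; exact herase

end aux

/-- Let `q = p^r` and `𝔽_q = GaloisField p r`. The set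
`{γ_j·t^{−i} : 1 ≤ j ≤ r, i ≥ 1, p ∤ i}` is `𝔽_p`-linearly independent in
`𝒱(𝔽_q(t)) = 𝔽_q(t)/{z^p − z}`. Concretely: if `U ∈ 𝔽_q[T]` has `U(0) = 0`, all of its
nonzero monomials have degree not divisible by `p`, and `z^p − z = U(1/t)` for some
`z ∈ 𝔽_q(t)`, then `U = 0`. -/
theorem stmt5 (p r : ℕ) [Fact p.Prime] (hr : 1 ≤ r) (q : ℕ) (hq : q = p ^ r)
    (U : Polynomial (GaloisField p r))
    (hU0 : U.coeff 0 = 0)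
    (hUcoeff : ∀ i : ℕ, 0 < i → p ∣ i → U.coeff i = 0)
    (hz : ∃ z : RatFunc (GaloisField p r),
      z ^ p - z = Polynomial.aeval ((RatFunc.X : RatFunc (GaloisField p r)))⁻¹ U) :
    U = 0 := by
  by_contra hU
  set K := GaloisField p r
  obtain ⟨z, hz⟩ := hz
  set n := U.natDegree with hn
  have hn1 : 1 ≤ n := by
    rcases Nat.eq_zero_or_pos n with h0 | h0
    · have hC : U = Polynomial.C (U.coeff 0) := Polynomial.eq_C_of_natDegree_eq_zero h0
      rw [hU0, Polynomial.C_0] at hC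
      exact absurd hC hU
    · exact h0
  have hpn : ¬ p ∣ n := fun hdvd =>
    Polynomial.leadingCoeff_ne_zero.mpr hU (hUcoeff n hn1 hdvd)
  have hval : (Polynomial.idealX K).valuation (RatFunc K) (z ^ p - z) =
      ((Multiplicative.ofAdd (n : ℤ) : Multiplicative ℤ) : WithZero (Multiplicative ℤ)) := by
    rw [hz]; exact val_aeval_eq hU
  rcases le_or_gt ((Polynomial.idealX K).valuation (RatFunc K) z) 1 with hle | hgt
  · have : (Polynomial.idealX K).valuation (RatFunc K) (z ^ p - z) ≤ 1 := by
      apply Valuation.map_sub_le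
      · rw [map_pow]; exact pow_le_one' hle p
      · exact hle
    rw [hval] at this
    have : ((Multiplicative.ofAdd (n : ℤ) : Multiplicative ℤ) : WithZero (Multiplicative ℤ)) ≤
        ((1 : Multiplicative ℤ) : WithZero (Multiplicative ℤ)) := by simpa using this
    rw [WithZero.coe_le_coe, ← ofAdd_zero, Multiplicative.ofAdd_le] at this
    omega
  · have hp2 : 1 < p := (Fact.out : p.Prime).one_lt
    have hlt : (Polynomial.idealX K).valuation (RatFunc K) z <
        (Polynomial.idealX K).valuation (RatFunc K) (z ^ p) := by
      rw [map_pow]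
      calc (Polynomial.idealX K).valuation (RatFunc K) z
          = (Polynomial.idealX K).valuation (RatFunc K) z ^ 1 := (pow_one _).symm
        _ < _ := pow_lt_pow_right₀ hgt hp2
    have : (Polynomial.idealX K).valuation (RatFunc K) (z ^ p - z) =
        (Polynomial.idealX K).valuation (RatFunc K) z ^ p := by
      rw [Valuation.map_sub_eq_of_lt_left _ hlt, map_pow]
    rw [hval] at this
    have hz0 : (Polynomial.idealX K).valuation (RatFunc K) z ≠ 0 :=
      fun h => by simp [h] at hgt
    obtain ⟨m, hm⟩ := WithZero.ne_zero_iff_exists.mp hz0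
    rw [← hm, ← WithZero.coe_pow, WithZero.coe_inj] at this
    have : (n : ℤ) = p * Multiplicative.toAdd m := by
      have := congrArg Multiplicative.toAdd this
      simpa [toAdd_pow, nsmul_eq_mul] using this
    have hd : (p : ℤ) ∣ (n : ℤ) := ⟨Multiplicative.toAdd m, this⟩
    exact hpn (Int.natCast_dvd_natCast.mp hd)
end

section
/- Fix a prime p and q = p^r. Let K be an 𝔽_q-field, let K(t,s) be the rational function field in two independent variables over K, and let f̃ = x^q + tx + s ∈ K(t,s)[x]. Fix an algebraic closure Ω of K(t,s); for n ≥ 1 let E_n ⊆ Ω be the splitting field of f̃^n over K(t,s), let F_n ⊆ Ω be the splitting field of L^n over K(t,s) where L = x^q + tx, and let α_n ∈ Ω be any root of f̃^n. Then E_n is the compositum inside Ω of F_n and K(t,s)(α_n). -/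
open Polynomial

set_option synthInstance.maxHeartbeats 1000000
set_option maxHeartbeats 1000000

/-- The `n`-fold composition `f^n` of a polynomial with itself, with `f^0 = X`. -/
noncomputable def polyIter {K : Type*} [Field K] (f : K[X]) : ℕ → K[X]
  | 0 => X
  | n + 1 => f.comp (polyIter f n)

/-- Let `q = p^r`, `K` an `𝔽_q`-field, `K(t,s)` the rational function
field in two variables, `f̃ = x^q + tx + s`, `L = x^q + tx`, and fix an algebraic closure
`Ω` of `K(t,s)`. For `n ≥ 1` let `E_n ⊆ Ω` be the splitting field of `f̃^n`, `F_n ⊆ Ω`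
the splitting field of `L^n`, and `α_n` any root of `f̃^n` in `Ω`. Then
`E_n = F_n · K(t,s)(α_n)` (compositum inside `Ω`). -/
theorem stmt7 (p r : ℕ) [Fact p.Prime] (hr : 1 ≤ r) (q : ℕ) (hq : q = p ^ r)
    (K : Type*) [Field K] [Algebra (GaloisField p r) K] (n : ℕ) (hn : 1 ≤ n) :
    let Kts := FractionRing (MvPolynomial (Fin 2) K)
    let t : Kts := algebraMap (MvPolynomial (Fin 2) K) Kts (MvPolynomial.X 0)
    let s : Kts := algebraMap (MvPolynomial (Fin 2) K) Kts (MvPolynomial.X 1)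
    let Ω := AlgebraicClosure Kts
    ∀ α ∈ (polyIter (X ^ q + C t * X + C s : Kts[X]) n).rootSet Ω,
      IntermediateField.adjoin Kts ((polyIter (X ^ q + C t * X + C s : Kts[X]) n).rootSet Ω) =
        IntermediateField.adjoin Kts ((polyIter (X ^ q + C t * X : Kts[X]) n).rootSet Ω) ⊔
          IntermediateField.adjoin Kts {α} := by
  intro Kts t s Ω α hα
  have hp := (Fact.out : p.Prime)
  -- characteristic p everywhere
  haveI : CharP K p :=
    charP_of_injective_algebraMap (algebraMap (GaloisField p r) K).injective p
  haveI : CharP Kts p :=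
    charP_of_injective_algebraMap
      (IsFractionRing.injective (MvPolynomial (Fin 2) K) Kts) p
  haveI : CharP Ω p :=
    charP_of_injective_algebraMap (algebraMap Kts Ω).injective p
  set f : Kts[X] := X ^ q + C t * X + C s with hf
  set L : Kts[X] := X ^ q + C t * X with hL
  have hq2 : 2 ≤ q := by
    have h1 : p ≤ p ^ r := Nat.le_self_pow (by omega) p
    have h2 := hp.two_le
    omega
  have hfd : f.natDegree = q := by
    rw [hf, hL]
    compute_degree!
    all_goals (try omega)
    all_goals (rw [if_neg (by omega : ¬ q = 1), if_neg (by omega : ¬ q = 0)]; norm_num)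
  have hLd : L.natDegree = q := by
    rw [hL]
    compute_degree!
    all_goals (try omega)
    all_goals (rw [if_neg (by omega : ¬ q = 1)]; norm_num)
  -- degrees of iterates
  have hiter : ∀ (g : Kts[X]), g.natDegree = q → ∀ m, (polyIter g m).natDegree = q ^ m := by
    intro g hg m
    induction m with
    | zero => simp [polyIter]
    | succ k ih =>
      rw [polyIter, natDegree_comp, hg, ih, pow_succ, mul_comm]
  have hfne : polyIter f n ≠ 0 := by
    intro h
    have := hiter f hfd n
    rw [h, natDegree_zero] at this
    have : 0 < q ^ n := Nat.pow_pos (by omega)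
    omega
  have hLne : polyIter L n ≠ 0 := by
    intro h
    have := hiter L hLd n
    rw [h, natDegree_zero] at this
    have : 0 < q ^ n := Nat.pow_pos (by omega)
    omega
  -- additivity step
  have step : ∀ a b : Ω, aeval (a + b) f = aeval a f + aeval b L := by
    intro a b
    rw [hf, hL]
    simp only [map_add, map_mul, map_pow, aeval_X, aeval_C]
    subst hq
    rw [add_pow_char_pow]
    ring
  have key : ∀ m (a b : Ω),
      aeval (a + b) (polyIter f m) = aeval a (polyIter f m) + aeval b (polyIter L m) := by
    intro m
    induction m with
    | zero => intro a b; simp [polyIter]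
    | succ k ih =>
      intro a b
      simp only [polyIter, aeval_comp]
      rw [ih, step]
  obtain ⟨-, hα0⟩ := (mem_rootSet).1 hα
  apply le_antisymm
  · rw [IntermediateField.adjoin_le_iff]
    intro β hβ
    obtain ⟨-, hβ0⟩ := (mem_rootSet).1 hβ
    have hmem : β - α ∈ (polyIter L n).rootSet Ω := by
      rw [mem_rootSet]
      refine ⟨hLne, ?_⟩
      have := key n α (β - α)
      rw [add_sub_cancel, hβ0, hα0, zero_add] at this
      exact this.symm
    have h1 : (β - α) ∈ (IntermediateField.adjoin Kts ((polyIter L n).rootSet Ω) ⊔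
        IntermediateField.adjoin Kts {α} : IntermediateField Kts Ω) :=
      le_sup_left (α := IntermediateField Kts Ω) (IntermediateField.subset_adjoin _ _ hmem)
    have h2 : α ∈ (IntermediateField.adjoin Kts ((polyIter L n).rootSet Ω) ⊔
        IntermediateField.adjoin Kts {α} : IntermediateField Kts Ω) :=
      le_sup_right (α := IntermediateField Kts Ω)
        (IntermediateField.subset_adjoin _ _ (Set.mem_singleton α))
    have : β = (β - α) + α := by ring
    rw [this]
    exact add_mem h1 h2
  · apply sup_le
    · rw [IntermediateField.adjoin_le_iff]
      intro x hx
      obtain ⟨-, hx0⟩ := (mem_rootSet).1 hx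
      have hmem : x + α ∈ (polyIter f n).rootSet Ω := by
        rw [mem_rootSet]
        refine ⟨hfne, ?_⟩
        have := key n α x
        rw [hα0, zero_add, hx0, add_comm α x] at this
        exact this
      have h1 : (x + α) ∈ IntermediateField.adjoin Kts ((polyIter f n).rootSet Ω) :=
        IntermediateField.subset_adjoin _ _ hmem
      have h2 : α ∈ IntermediateField.adjoin Kts ((polyIter f n).rootSet Ω) :=
        IntermediateField.subset_adjoin _ _ hα
      have : x = (x + α) - α := by ring
      rw [this]
      exact sub_mem h1 h2
    · rw [IntermediateField.adjoin_le_iff]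
      intro x hx
      rw [Set.mem_singleton_iff] at hx
      subst hx
      exact IntermediateField.subset_adjoin _ _ hα
end

section
/- Let K be a field of characteristic p, let q = p^r, let t₀, s₀ ∈ K, and set f = x^q + t₀x + s₀ and L = x^q + t₀x in K[x]. Then for every n ≥ 1 one has the identity of polynomials f^n = L^n + f^{n−1}(s₀), where f^n and L^n denote n-fold compositions and f^{n−1}(s₀) ∈ K is the value of f^{n−1} at s₀ (regarded as a constant polynomial). -/
open Polynomial

/-- Let `K` be a field of characteristic `p`, `q = p^r`, `t₀ s₀ ∈ K`,
`f = x^q + t₀x + s₀` and `L = x^q + t₀x`. Then for every `n ≥ 1` one has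
`f^n = L^n + f^{n-1}(s₀)` (the latter summand regarded as a constant polynomial). -/
theorem stmt8 (p r : ℕ) (hp : p.Prime) (hr : 1 ≤ r) (q : ℕ) (hq : q = p ^ r)
    (K : Type*) [Field K] [CharP K p] (t₀ s₀ : K) :
    ∀ n : ℕ, 1 ≤ n →
      polyIter (X ^ q + C t₀ * X + C s₀) n =
        polyIter (X ^ q + C t₀ * X) n +
          C ((polyIter (X ^ q + C t₀ * X + C s₀) (n - 1)).eval s₀) := by
  haveI : Fact p.Prime := ⟨hp⟩
  set f : K[X] := X ^ q + C t₀ * X + C s₀ with hf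
  set L : K[X] := X ^ q + C t₀ * X with hL
  have key : ∀ (g : K[X]) (c : K), L.comp (g + C c) = L.comp g + C (L.eval c) := by
    intro g c
    have hadd : (g + C c) ^ q = g ^ q + (C c) ^ q := by
      subst hq; exact add_pow_char_pow g (C c) p r
    simp only [hL, add_comp, X_pow_comp, mul_comp, C_comp, X_comp, hadd,
      eval_add, eval_pow, eval_mul, eval_C, eval_X, C_add, C_pow, C_mul]
    ring
  intro n hn
  induction n with
  | zero => omega
  | succ m ih =>
    rcases Nat.eq_zero_or_pos m with hm | hm
    · subst hm
      simp [polyIter, hf, hL, add_comp, mul_comp]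
    · have ih' := ih hm
      have hm1 : m - 1 + 1 = m := Nat.succ_pred_eq_of_pos hm
      show f.comp (polyIter f m) = L.comp (polyIter L m) + C ((polyIter f m).eval s₀)
      have step1 : f.comp (polyIter f m) = L.comp (polyIter f m) + C s₀ := by
        rw [hf]; simp [add_comp]
      have hev : (polyIter f m).eval s₀
          = L.eval ((polyIter f (m - 1)).eval s₀) + s₀ := by
        conv_lhs => rw [← hm1]
        show (f.comp (polyIter f (m - 1))).eval s₀ = _
        rw [hf]; simp [eval_comp]
      rw [hev, step1]
      conv_lhs => rw [ih']
      rw [key, C_add]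
      ring
end

section
/- Fix a prime p, a power q = p^r, and n ≥ 1. Let R_n = 𝔽_q[y]/(y^n), let H = (R_n)_1^× = {1 + a₁y + ⋯ + a_{n−1}y^{n−1} : a_i ∈ 𝔽_q} ≤ (R_n)^×, and let G = R_n ⋊ H, where H acts on the additive group R_n by multiplication. Then the commutator subgroup of G equals {(λ, 1) : λ ∈ yR_n}, and the abelianization of G is isomorphic to (R_n/yR_n) × H ≅ 𝔽_q × H, the quotient map sending (λ, μ) to (λ mod y, μ). -/
open Polynomial

set_option synthInstance.maxHeartbeats 1000000
set_option maxHeartbeats 1000000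

/-- The monoid hom turning an additive automorphism into a multiplicative one. -/
def addAutToMulAut (R : Type*) [AddCommGroup R] : Multiplicative (AddAut R) →* MulAut (Multiplicative R) where
  toFun e := AddEquiv.toMultiplicative (Multiplicative.toAdd e)
  map_one' := rfl
  map_mul' _ _ := rfl

/-- The action of the unit group of a commutative ring on its (multiplicatively written)
additive group, by multiplication. -/
def unitsAut (R : Type*) [CommRing R] : Rˣ →* MulAut (Multiplicative R) :=
  (addAutToMulAut R).comp (DistribMulAction.toAddAut Rˣ R)

/-- The subgroup `1 + yR` of `Rˣ`: the units congruent to `1` modulo the ideal `(y)`,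
realized as the kernel of `Rˣ → (R/(y))ˣ`. -/
def subOne (R : Type*) [CommRing R] (y : R) : Subgroup Rˣ :=
  (Units.map (Ideal.Quotient.mk (Ideal.span {y})).toMonoidHom).ker

section Aux

variable {R : Type*} [CommRing R] (y : R)

lemma mk_coe_subOne (h : ↥(subOne R y)) :
    Ideal.Quotient.mk (Ideal.span {y}) (h : Rˣ) = 1 := by
  have h2 : (Units.map (Ideal.Quotient.mk (Ideal.span {y})).toMonoidHom) (h : Rˣ) = 1 := h.2
  have := congrArg Units.val h2
  simpa using this

lemma unitsAut_apply (u : Rˣ) (m : Multiplicative R) :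
    (unitsAut R u) m = Multiplicative.ofAdd ((u : R) * m.toAdd) := rfl

/-- The map `G → (R/(y)) × H`. -/
def auxψ :
    (Multiplicative R ⋊[(unitsAut R).comp (subOne R y).subtype] ↥(subOne R y)) →*
      Multiplicative (R ⧸ Ideal.span {y}) × ↥(subOne R y) where
  toFun g := (Multiplicative.ofAdd (Ideal.Quotient.mk _ g.left.toAdd), g.right)
  map_one' := by
    ext
    · show Ideal.Quotient.mk _ (0 : R) = 0
      simp
    · rfl
  map_mul' g1 g2 := by
    ext
    · show Ideal.Quotient.mk (Ideal.span {y}) (g1 * g2).left.toAdd =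
        Ideal.Quotient.mk _ g1.left.toAdd + Ideal.Quotient.mk _ g2.left.toAdd
      have : (g1 * g2).left = g1.left * (unitsAut R) ((subOne R y).subtype g1.right) g2.left := rfl
      rw [this]
      show Ideal.Quotient.mk (Ideal.span {y})
        (g1.left.toAdd + ((g1.right : Rˣ) : R) * g2.left.toAdd) = _
      rw [map_add, map_mul, mk_coe_subOne, one_mul]
    · rfl

lemma auxψ_surjective : Function.Surjective (auxψ y) := by
  rintro ⟨c, h⟩
  obtain ⟨a, rfl⟩ := Ideal.Quotient.mk_surjective c.toAdd
  exact ⟨SemidirectProduct.mk (Multiplicative.ofAdd a) h, rfl⟩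

open scoped commutatorElement in
lemma auxψ_ker_eq (hy : IsNilpotent y) :
    (auxψ y).ker =
      commutator (Multiplicative R ⋊[(unitsAut R).comp (subOne R y).subtype] ↥(subOne R y)) := by
  refine le_antisymm ?_ (Abelianization.commutator_subset_ker (auxψ y))
  intro g hg
  rw [MonoidHom.mem_ker, Prod.ext_iff] at hg
  obtain ⟨hg1, hg2⟩ := hg
  have hg2' : g.right = 1 := hg2
  have hmem : g.left.toAdd ∈ Ideal.span {y} := by
    rw [← Ideal.Quotient.eq_zero_iff_mem]
    exact hg1
  rw [Ideal.mem_span_singleton'] at hmem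
  obtain ⟨a, ha⟩ := hmem
  -- the unit 1 - y
  obtain ⟨u, hu⟩ := hy.isUnit_one_sub
  have humem : u ∈ subOne R y := by
    rw [subOne, MonoidHom.mem_ker]
    ext
    show Ideal.Quotient.mk (Ideal.span {y}) (u : R) = 1
    rw [hu, map_sub, map_one, Ideal.Quotient.eq_zero_iff_mem.mpr
      (Ideal.mem_span_singleton_self y), sub_zero]
  set g1 : Multiplicative R ⋊[(unitsAut R).comp (subOne R y).subtype] ↥(subOne R y) :=
    SemidirectProduct.mk (Multiplicative.ofAdd a) 1
  set g2 : Multiplicative R ⋊[(unitsAut R).comp (subOne R y).subtype] ↥(subOne R y) :=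
    SemidirectProduct.mk 1 ⟨u, humem⟩
  have hcomm : ⁅g1, g2⁆ = g := by
    refine SemidirectProduct.ext ?_ ?_
    · show (⁅g1, g2⁆).left = g.left
      have hgl : g.left = Multiplicative.ofAdd (a * y) := by rw [show g.left = Multiplicative.ofAdd g.left.toAdd from rfl, ← ha]
      rw [hgl, commutatorElement_def]
      simp only [SemidirectProduct.mul_left, SemidirectProduct.inv_left,
        SemidirectProduct.mul_right, SemidirectProduct.inv_right, g1, g2,
        MonoidHom.comp_apply, Subgroup.coe_subtype, unitsAut_apply]
      simp only [one_mul, mul_one, inv_one, toAdd_one, toAdd_ofAdd, toAdd_inv,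
        OneMemClass.coe_one, Units.val_one, mul_zero, ofAdd_zero, mul_neg,
        ← ofAdd_add, hu]
      congr 1
      ring
    · show (⁅g1, g2⁆).right = g.right
      rw [hg2', commutatorElement_def]
      simp
  rw [← hcomm]
  exact Subgroup.commutator_mem_commutator (Subgroup.mem_top _) (Subgroup.mem_top _)

end Aux

/-- Fix `q = p^r` and `n ≥ 1`. Let `R_n = 𝔽_q[y]/(y^n)`,
`H = (R_n)₁^× = 1 + yR_n ≤ (R_n)^×` and `G = R_n ⋊ H` (with `H` acting on the additive
group `R_n` by multiplication). Then the commutator subgroup of `G` is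
`{(λ, 1) : λ ∈ yR_n}`, and the abelianization of `G` is `(R_n/yR_n) × H ≅ 𝔽_q × H`,
the quotient map sending `(λ, μ)` to `(λ mod y, μ)`. -/
theorem stmt13 (p r : ℕ) [Fact p.Prime] (hr : 1 ≤ r) (q : ℕ) (hq : q = p ^ r)
    (n : ℕ) (hn : 1 ≤ n) :
    let Rn := Polynomial (GaloisField p r) ⧸
      Ideal.span {(X : Polynomial (GaloisField p r)) ^ n}
    let yim : Rn := Ideal.Quotient.mk _ (X : Polynomial (GaloisField p r))
    let H : Subgroup Rnˣ := subOne Rn yim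
    let φ : ↥H →* MulAut (Multiplicative Rn) := (unitsAut Rn).comp H.subtype
    let G := Multiplicative Rn ⋊[φ] ↥H
    ((commutator G : Set G) =
        {g : G | (∃ a : Rn, Multiplicative.toAdd g.left = yim * a) ∧ g.right = 1}) ∧
      (∃ e : Abelianization G ≃* Multiplicative (Rn ⧸ Ideal.span {yim}) × ↥H,
        ∀ g : G, e (Abelianization.of g) =
          (Multiplicative.ofAdd
            (Ideal.Quotient.mk (Ideal.span {yim}) (Multiplicative.toAdd g.left)), g.right)) ∧
      Nonempty ((Rn ⧸ Ideal.span {yim}) ≃+* GaloisField p r) := by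
  intro Rn yim H φ G
  have hy : IsNilpotent yim := by
    refine ⟨n, ?_⟩
    show (Ideal.Quotient.mk _ (X : Polynomial (GaloisField p r))) ^ n = 0
    rw [← map_pow, Ideal.Quotient.eq_zero_iff_mem]
    exact Ideal.mem_span_singleton_self _
  have hker := auxψ_ker_eq yim hy
  refine ⟨?_, ?_, ?_⟩
  · ext g
    rw [Set.mem_setOf_eq, SetLike.mem_coe, show commutator G = (auxψ yim).ker from hker.symm,
      MonoidHom.mem_ker, Prod.ext_iff]
    constructor
    · rintro ⟨h1, h2⟩
      refine ⟨?_, h2⟩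
      have h1' : Ideal.Quotient.mk (Ideal.span {yim}) g.left.toAdd = 0 := h1
      rw [Ideal.Quotient.eq_zero_iff_mem, Ideal.mem_span_singleton] at h1'
      exact h1'
    · rintro ⟨⟨a, ha⟩, h2⟩
      refine ⟨?_, h2⟩
      show Multiplicative.ofAdd (Ideal.Quotient.mk (Ideal.span {yim}) g.left.toAdd) = 1
      rw [ha, ofAdd_eq_one, Ideal.Quotient.eq_zero_iff_mem]
      exact Ideal.mul_mem_right _ _ (Ideal.mem_span_singleton_self _)
  · refine ⟨(QuotientGroup.quotientMulEquivOfEq hker.symm).trans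
      (QuotientGroup.quotientKerEquivOfSurjective _ (auxψ_surjective yim)), fun g => ?_⟩
    rfl
  · refine ⟨?_⟩
    have h1 : Ideal.span {yim} =
        (Ideal.span {(X : Polynomial (GaloisField p r))}).map (Ideal.Quotient.mk _) := by
      rw [Ideal.map_span, Set.image_singleton]
    have h2 : Ideal.span {(X : Polynomial (GaloisField p r)) ^ n} ⊔
        Ideal.span {(X : Polynomial (GaloisField p r))} =
        Ideal.span {(X : Polynomial (GaloisField p r)) - C 0} := by
      rw [map_zero, sub_zero, sup_eq_right.mpr]
      exact Ideal.span_singleton_le_span_singleton.mpr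
        (dvd_pow_self X (Nat.one_le_iff_ne_zero.mp hn))
    exact (Ideal.quotEquivOfEq h1).trans <|
      (DoubleQuot.quotQuotEquivQuotSup _ _).trans <|
      (Ideal.quotEquivOfEq h2).trans (quotientSpanXSubCAlgEquiv 0).toRingEquiv
end

section
/- Fix a prime p and q = p^r. Let K be a field containing 𝔽_q, let t₀ ∈ K with t₀ ≠ 0, let L = x^q + t₀x ∈ K[x], and let n ≥ 1. In a splitting field of the n-fold composition L^n over K, let V denote the set of roots of L^n. Then V has exactly q^n elements, V is an 𝔽_q-subspace (closed under addition and under multiplication by elements of 𝔽_q), the map β ↦ L(β) sends V into V, and there exists β ∈ V such that every element of V can be written uniquely as a₀β + a₁L(β) + a₂L²(β) + ⋯ + a_{n−1}L^{n−1}(β) with a₀, …, a_{n−1} ∈ 𝔽_q (i.e. V is a cyclic 𝔽_q[y]/(y^n)-module with y acting as L). -/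
open Polynomial

lemma polyIter_aeval {K E : Type*} [Field K] [CommRing E] [Algebra K E]
    (f : K[X]) (m : ℕ) (x : E) :
    aeval x (polyIter f m) = (fun y => aeval y f)^[m] x := by
  induction m with
  | zero => simp [polyIter]
  | succ m ih => rw [polyIter, aeval_comp, ih, Function.iterate_succ_apply']

lemma ncard_rootSet_le {K E : Type*} [Field K] [CommRing E] [IsDomain E] [Algebra K E]
    (f : K[X]) : (f.rootSet E).ncard ≤ f.natDegree := by
  classical
  rw [rootSet_def, Set.ncard_coe_finset]
  exact le_trans (Multiset.toFinset_card_le _)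
    (le_trans (card_roots' _) natDegree_map_le)


/-- Let `q = p^r`, `K ⊇ 𝔽_q` a field, `t₀ ∈ K` nonzero, `L = x^q + t₀x`
and `n ≥ 1`. In a splitting field of `L^n` over `K`, the set `V` of roots of `L^n` has
exactly `q^n` elements, is an `𝔽_q`-subspace, is stable under `β ↦ L(β)`, and is a cyclic
`𝔽_q[y]/(y^n)`-module with `y` acting as `L`: there is `β ∈ V` such that every `v ∈ V`
is uniquely `a₀β + a₁L(β) + ⋯ + a_{n−1}L^{n−1}(β)` with `a_i ∈ 𝔽_q`. -/
theorem stmt16 (p r : ℕ) [Fact p.Prime] (hr : 1 ≤ r) (q : ℕ) (hq : q = p ^ r)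
    (K : Type*) [Field K] [Algebra (GaloisField p r) K]
    (t₀ : K) (ht₀ : t₀ ≠ 0) (n : ℕ) (hn : 1 ≤ n) :
    let E := SplittingField (polyIter (X ^ q + C t₀ * X) n)
    let V : Set E := (polyIter (X ^ q + C t₀ * X) n).rootSet E
    let Lmap : E → E := fun β => β ^ q + algebraMap K E t₀ * β
    V.ncard = q ^ n ∧
      (∀ a ∈ V, ∀ b ∈ V, a + b ∈ V) ∧
      (∀ γ₀ : GaloisField p r, ∀ a ∈ V,
        algebraMap K E (algebraMap (GaloisField p r) K γ₀) * a ∈ V) ∧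
      (∀ a ∈ V, Lmap a ∈ V) ∧
      ∃ β ∈ V, ∀ v ∈ V, ∃! cf : Fin n → GaloisField p r,
        v = ∑ i : Fin n,
          algebraMap K E (algebraMap (GaloisField p r) K (cf i)) * (Lmap^[(i : ℕ)] β) := by
  classical
  have hp := Fact.out (p := p.Prime)
  subst hq
  set q := p ^ r with hq
  set G := GaloisField p r with hG
  set Lp : K[X] := X ^ q + C t₀ * X with hLp
  intro E V Lmap
  have hq1 : 1 < q := Nat.one_lt_pow (by omega) hp.one_lt
  have hq0 : q ≠ 0 := by omega
  haveI : CharP K p := charP_of_injective_algebraMap (algebraMap G K).injective p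
  haveI : CharP E p := charP_of_injective_algebraMap (algebraMap K E).injective p
  -- degrees
  have hdegLp : Lp.degree = (q : WithBot ℕ) := by
    rw [hLp, degree_add_eq_left_of_degree_lt, degree_X_pow]
    rw [degree_X_pow, degree_C_mul_X ht₀]
    exact_mod_cast hq1
  have hndLp : Lp.natDegree = q := natDegree_eq_of_degree_eq_some hdegLp
  have hdeg : ∀ m, (polyIter Lp m).natDegree = q ^ m := by
    intro m
    induction m with
    | zero => simp [polyIter]
    | succ m ih => rw [polyIter, natDegree_comp, ih, hndLp, pow_succ, mul_comm]
  have hne : ∀ m, polyIter Lp m ≠ 0 := by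
    intro m h
    have := hdeg m
    rw [h, natDegree_zero] at this
    exact pow_ne_zero m hq0 this.symm
  -- derivative and separability
  have hqK : ((q : ℕ) : K) = 0 :=
    (CharP.cast_eq_zero_iff K p q).mpr (dvd_pow_self p (by omega))
  have hderLp : derivative Lp = C t₀ := by
    rw [hLp, derivative_add, derivative_X_pow, derivative_mul, derivative_C, derivative_X, hqK]
    simp
  have hder : ∀ m, derivative (polyIter Lp m) = C (t₀ ^ m) := by
    intro m
    induction m with
    | zero => simp [polyIter]
    | succ m ih => rw [polyIter, derivative_comp, hderLp, C_comp, ih, ← C_mul, ← pow_succ]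
  have hsep : (polyIter Lp n).Separable := by
    rw [separable_def, hder n]
    exact ⟨0, C ((t₀ ^ n)⁻¹), by
      rw [zero_mul, zero_add, ← C_mul, inv_mul_cancel₀ (pow_ne_zero n ht₀), C_1]⟩
  -- evaluation of iterates
  have hLmap : ∀ x : E, aeval x Lp = Lmap x := by
    intro x
    simp [hLp, Lmap]
  have hiter : ∀ (m : ℕ) (x : E), aeval x (polyIter Lp m) = Lmap^[m] x := by
    intro m x
    rw [polyIter_aeval, funext hLmap]
  have hmem : ∀ x : E, x ∈ V ↔ Lmap^[n] x = 0 := by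
    intro x
    rw [show V = (polyIter Lp n).rootSet E from rfl, mem_rootSet_of_ne (hne n), hiter]
  -- additivity etc.
  have hfrob : ∀ x y : E, (x + y) ^ q = x ^ q + y ^ q := fun x y => by rw [hq]; exact add_pow_char_pow x y p r
  have Ladd : ∀ x y : E, Lmap (x + y) = Lmap x + Lmap y := by
    intro x y
    simp only [Lmap]
    rw [hfrob]
    ring
  have L0 : Lmap 0 = 0 := by simp [Lmap, hq0]
  -- Frobenius-fixed scalars
  set c : G → E := fun γ => algebraMap K E (algebraMap G K γ) with hc
  haveI : Fintype G := Fintype.ofFinite G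
  have hcardG : Fintype.card G = q := by
    rw [← Nat.card_eq_fintype_card, GaloisField.card p r (by omega)]
  have hγq : ∀ γ : G, γ ^ q = γ := by
    intro γ
    rw [← hcardG]
    exact FiniteField.pow_card γ
  have hcq : ∀ γ : G, (c γ) ^ q = c γ := by
    intro γ
    rw [hc]
    simp only [← map_pow, hγq]
  have hcinj : Function.Injective c := fun a b h =>
    (algebraMap G K).injective ((algebraMap K E).injective h)
  have hc0 : c 0 = 0 := by simp [hc]
  have Lsmul : ∀ (γ : G) (x : E), Lmap (c γ * x) = c γ * Lmap x := by
    intro γ x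
    simp only [Lmap]
    rw [mul_pow, hcq]
    ring
  -- iterate versions
  have Ln0 : ∀ m, Lmap^[m] (0 : E) = 0 := fun m => Function.iterate_fixed L0 m
  have Lnadd : ∀ m (x y : E), Lmap^[m] (x + y) = Lmap^[m] x + Lmap^[m] y := by
    intro m
    induction m with
    | zero => simp
    | succ m ih =>
      intro x y
      rw [Function.iterate_succ_apply', Function.iterate_succ_apply',
        Function.iterate_succ_apply', ih, Ladd]
  have Lnsmul : ∀ m (γ : G) (x : E), Lmap^[m] (c γ * x) = c γ * Lmap^[m] x := by
    intro m
    induction m with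
    | zero => simp
    | succ m ih =>
      intro γ x
      rw [Function.iterate_succ_apply', Function.iterate_succ_apply', ih, Lsmul]
  have Lnsum : ∀ m (g : Fin n → E), Lmap^[m] (∑ i, g i) = ∑ i, Lmap^[m] (g i) := by
    intro m g
    exact map_sum (AddMonoidHom.mk' (Lmap^[m]) (fun a b => Lnadd m a b)) g Finset.univ
  -- the four closure statements
  have hVadd : ∀ a ∈ V, ∀ b ∈ V, a + b ∈ V := by
    intro a ha b hb
    rw [hmem] at *
    rw [Lnadd, ha, hb, add_zero]
  have hVsmul : ∀ γ₀ : G, ∀ a ∈ V, c γ₀ * a ∈ V := by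
    intro γ₀ a ha
    rw [hmem] at *
    rw [Lnsmul, ha, mul_zero]
  have hVstab : ∀ a ∈ V, Lmap a ∈ V := by
    intro a ha
    rw [hmem] at *
    rw [← Function.iterate_succ_apply, Function.iterate_succ_apply', ha, L0]
  -- cardinality
  have hcardV : V.ncard = q ^ n := by
    have h1 := card_rootSet_eq_natDegree hsep (SplittingField.splits (polyIter Lp n))
    rw [hdeg n] at h1
    rw [show V = (polyIter Lp n).rootSet E from rfl, ← Nat.card_coe_set_eq,
      Nat.card_eq_fintype_card]
    exact h1
  -- existence of a cyclic vector
  obtain ⟨β, hβV, hβ⟩ : ∃ β ∈ V, Lmap^[n - 1] β ≠ 0 := by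
    by_contra h
    push_neg at h
    have hsub : V ⊆ (polyIter Lp (n - 1)).rootSet E := by
      intro x hx
      rw [mem_rootSet_of_ne (hne (n - 1)), hiter]
      exact h x hx
    have h1 : V.ncard ≤ q ^ (n - 1) := by
      refine le_trans (Set.ncard_le_ncard hsub (rootSet_finite _ _)) ?_
      have := ncard_rootSet_le (E := E) (polyIter Lp (n - 1))
      rwa [hdeg] at this
    rw [hcardV] at h1
    have h2 : q ^ (n - 1) < q ^ n := Nat.pow_lt_pow_right hq1 (by omega)
    omega
  have hβzero : ∀ m, n ≤ m → Lmap^[m] β = 0 := by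
    intro m hm
    have : Lmap^[m] β = Lmap^[m - n] (Lmap^[n] β) := by
      rw [← Function.iterate_add_apply, Nat.sub_add_cancel hm]
    rw [this, (hmem β).mp hβV, Ln0]
  -- the representation map
  set F : (Fin n → G) → E := fun cf => ∑ i : Fin n, c (cf i) * Lmap^[(i : ℕ)] β with hF
  have hterm : ∀ (γ : G) (i : ℕ), Lmap^[n] (c γ * Lmap^[i] β) = 0 := by
    intro γ i
    rw [Lnsmul, ← Function.iterate_add_apply, hβzero (n + i) (by omega), mul_zero]
  have hFmem : ∀ cf, F cf ∈ V := by
    intro cf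
    rw [hmem, hF, Lnsum]
    exact Finset.sum_eq_zero fun i _ => hterm _ _
  have hker : ∀ cf : Fin n → G, F cf = 0 → cf = 0 := by
    intro cf h0
    by_contra hne0
    have hS : (Finset.univ.filter (fun i : Fin n => cf i ≠ 0)).Nonempty := by
      rcases Function.ne_iff.mp hne0 with ⟨i, hi⟩
      exact ⟨i, Finset.mem_filter.mpr ⟨Finset.mem_univ i, hi⟩⟩
    set j := (Finset.univ.filter (fun i : Fin n => cf i ≠ 0)).min' hS with hj
    have hjmem := Finset.min'_mem _ hS
    have hjne : cf j ≠ 0 := (Finset.mem_filter.mp hjmem).2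
    have hjmin : ∀ i : Fin n, cf i ≠ 0 → j ≤ i := fun i hi =>
      Finset.min'_le _ _ (Finset.mem_filter.mpr ⟨Finset.mem_univ i, hi⟩)
    have happ : Lmap^[n - 1 - (j : ℕ)] (F cf) = c (cf j) * Lmap^[n - 1] β := by
      rw [hF, Lnsum]
      rw [Finset.sum_eq_single_of_mem j (Finset.mem_univ j)]
      · rw [Lnsmul, ← Function.iterate_add_apply,
          show (n - 1 - (j : ℕ)) + (j : ℕ) = n - 1 by
            have := j.isLt; omega]
      · intro i _ hij
        rw [Lnsmul, ← Function.iterate_add_apply]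
        by_cases hcase : (i : ℕ) < (j : ℕ)
        · have : cf i = 0 := by
            by_contra h
            have := hjmin i h
            omega
          rw [this, hc0, zero_mul]
        · have hij' : (j : ℕ) < (i : ℕ) := by
            rcases Nat.lt_or_ge (j : ℕ) (i : ℕ) with h | h
            · exact h
            · exfalso
              apply hij
              apply Fin.ext
              omega
          have hin : n ≤ (n - 1 - (j : ℕ)) + (i : ℕ) := by
            have := j.isLt
            omega
          rw [hβzero _ hin, mul_zero]
    rw [h0, Ln0] at happ
    rcases mul_eq_zero.mp happ.symm with h | h
    · exact hjne (hcinj (h.trans hc0.symm))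
    · exact hβ h
  have hFinj : Function.Injective F := by
    intro a b hab
    have hsub : F (a - b) = F a - F b := by
      rw [hF]
      simp only [Pi.sub_apply]
      rw [← Finset.sum_sub_distrib]
      congr 1
      funext i
      rw [hc]
      simp only [map_sub, sub_mul]
    have h0 : F (a - b) = 0 := by rw [hsub, hab, sub_self]
    exact sub_eq_zero.mp (hker _ h0)
  -- surjectivity via cardinality
  haveI : Finite (V : Set E) := (rootSet_finite _ _).to_subtype
  set F' : (Fin n → G) → V := fun cf => ⟨F cf, hFmem cf⟩ with hF'
  have hF'inj : Function.Injective F' := fun a b h => hFinj (congrArg Subtype.val h)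
  have hcards : Nat.card (Fin n → G) = Nat.card V := by
    rw [Nat.card_fun, Nat.card_eq_fintype_card (α := Fin n), Fintype.card_fin,
      Nat.card_eq_fintype_card (α := G), hcardG, Nat.card_coe_set_eq, hcardV]
  have hF'bij : Function.Bijective F' :=
    (Nat.bijective_iff_injective_and_card F').mpr ⟨hF'inj, hcards⟩
  refine ⟨hcardV, hVadd, hVsmul, hVstab, β, hβV, ?_⟩
  intro v hv
  obtain ⟨cf, hcf⟩ := hF'bij.2 ⟨v, hv⟩
  have hcf' : F cf = v := congrArg Subtype.val hcf
  refine ⟨cf, hcf'.symm, ?_⟩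
  intro y hy
  apply hFinj
  rw [hcf']
  exact hy.symm
end
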